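/- arXiv:1211.6310 — 2 statements merged into one kernel-verified Lean document; each statement's English description precedes it below -/
import Mathlib

section
/- With the notation of the cyclic-shift endomorphism on generic matrices: let f_1,…,f_n be elements of the algebra generated by the generic matrices B_k = (x_{ij,k}) inside M_n(R), where R is the free algebra on the variables x_{ij,k}, and fix a column index k. Then the column vectors f_1^k,…,f_n^k (the k-th columns of f_1,…,f_n, viewed in R^n) are linearly independent over F if and only if the matrices f_1,…,f_n are linearly independent over F. -/
/-!
Taking the `k`-th column is `F`-linear, so it suffices that it is injective on the generic
matrix algebra. The shift `x_{ij,k} ↦ x_{i+1,j+1,k}` carries the `(i,j)` entry of every element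
of that algebra to its `(i+1,j+1)` entry, so if column `k` vanishes then so does column `k+1`,
and going around `Fin n` every column vanishes.
-/

noncomputable section

/-- The generic `n × n` matrix `B_k` over the free algebra on the variables
`x_{ij,k}`: its `(i,j)` entry is the variable `x_{ij,k}`. -/
def genericMatrix (F : Type*) [Field F] (n : ℕ) (k : ℕ) :
    Matrix (Fin n) (Fin n) (FreeAlgebra F (Fin n × Fin n × ℕ)) :=
  fun i j => FreeAlgebra.ι F (i, j, k)

def genericShift (F : Type*) [Field F] (n : ℕ) [NeZero n] :
    FreeAlgebra F (Fin n × Fin n × ℕ) →ₐ[F] FreeAlgebra F (Fin n × Fin n × ℕ) :=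
  FreeAlgebra.lift F fun p => FreeAlgebra.ι F (p.1 + 1, p.2.1 + 1, p.2.2)

theorem genericShift_entry (F : Type*) [Field F] (n : ℕ) [NeZero n]
    {M : Matrix (Fin n) (Fin n) (FreeAlgebra F (Fin n × Fin n × ℕ))}
    (hM : M ∈ Algebra.adjoin F (Set.range (genericMatrix F n))) (i j : Fin n) :
    genericShift F n (M i j) = M (i + 1) (j + 1) := by
  induction hM using Algebra.adjoin_induction generalizing i j with
  | mem x hx =>
    obtain ⟨m, rfl⟩ := hx
    simp [genericMatrix, genericShift]
  | algebraMap c =>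
    simp only [Matrix.algebraMap_matrix_apply, add_left_inj]
    split_ifs <;> simp
  | add x y _ _ ihx ihy => simp [ihx, ihy]
  | mul x y _ _ ihx ihy =>
    simp only [Matrix.mul_apply, map_sum, map_mul, ihx, ihy]
    exact Fintype.sum_equiv (Equiv.addRight 1) _ _ fun l => rfl

open Fin.NatCast in
theorem Fin.cyclic_induction {n : ℕ} [NeZero n] {P : Fin n → Prop} {k : Fin n} (hk : P k)
    (hsucc : ∀ j, P j → P (j + 1)) (j : Fin n) : P j := by
  have hiter : ∀ m : ℕ, P (k + m) := by
    intro m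
    induction m with
    | zero => simpa using hk
    | succ m ih => simpa [add_assoc] using hsucc _ ih
  simpa using hiter (j - k).val

theorem generic_eq_zero_of_col_eq_zero (F : Type*) [Field F] (n : ℕ) [NeZero n]
    {M : Matrix (Fin n) (Fin n) (FreeAlgebra F (Fin n × Fin n × ℕ))}
    (hM : M ∈ Algebra.adjoin F (Set.range (genericMatrix F n))) {k : Fin n}
    (hk : ∀ i, M i k = 0) : M = 0 := by
  ext i j
  refine Fin.cyclic_induction (P := fun j => ∀ i, M i j = 0) hk (fun j hj i => ?_) j i
  rw [← sub_add_cancel i 1, ← genericShift_entry F n hM, hj, map_zero]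

/-- Let `f₁, …, f_N` be elements of the algebra generated by the generic matrices
`B_k` inside `M_n(R)`, `R` the free algebra on the variables `x_{ij,k}`, and fix a
column index `k`. Then the `k`-th columns of the `f_t`, viewed as vectors in `Rⁿ`,
are linearly independent over `F` if and only if the matrices `f₁, …, f_N` are
linearly independent over `F`. -/
theorem generic_columns_linearIndependent_iff (F : Type*) [Field F] (n : ℕ) [NeZero n]
    {N : ℕ} (f : Fin N → Matrix (Fin n) (Fin n) (FreeAlgebra F (Fin n × Fin n × ℕ)))
    (hf : ∀ t, f t ∈ Algebra.adjoin F (Set.range (genericMatrix F n)))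
    (k : Fin n) :
    LinearIndependent F (fun t : Fin N => (fun i : Fin n => f t i k)) ↔
      LinearIndependent F f := by
  let col := LinearMap.proj k ∘ₗ
    (Matrix.transposeLinearEquiv (Fin n) (Fin n) F (FreeAlgebra F (Fin n × Fin n × ℕ))).toLinearMap
  have hspan : Submodule.span F (Set.range f) ≤
      Subalgebra.toSubmodule (Algebra.adjoin F (Set.range (genericMatrix F n))) :=
    Submodule.span_le.2 (Set.range_subset_iff.2 hf)
  have hker : Disjoint (Submodule.span F (Set.range f)) (LinearMap.ker col) := by
    refine Submodule.disjoint_def.2 fun M hM hcol => ?_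
    exact generic_eq_zero_of_col_eq_zero F n (hspan hM) (congrFun hcol)
  exact ⟨fun h => h.of_comp col, fun h => h.map hker⟩
end
end

section
/- Let E be the Grassmann algebra with the Z/2-grading induced by deg(e_i) = 1 for i ≤ k and 0 otherwise (the grading deg(·)_{k*}), and let R be the Z/2-graded algebra of 2×2 upper-triangular matrices with entries in E, graded entrywise. Then the graded monomial z_1 z_2 ⋯ z_{k+1} in degree-1 variables is a graded polynomial identity of R, i.e., any product of k+1 homogeneous degree-1 elements of R is zero. -/
/-- The generator `e_i` of the infinite-dimensional Grassmann algebra. -/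
noncomputable def grassGen (F : Type*) [Field F] (i : ℕ) : ExteriorAlgebra F (ℕ →₀ F) :=
  ExteriorAlgebra.ι F (Finsupp.single i 1)

/-- The homogeneous component of degree `g ∈ ℤ/2` of the Grassmann algebra for the
grading `deg(·)_{k*}` (`deg(e_i) = 1` for the first `k` generators, `0` otherwise). -/
noncomputable def grassCompKStar (F : Type*) [Field F] (k : ℕ) (g : ZMod 2) :
    Submodule F (ExteriorAlgebra F (ℕ →₀ F)) :=
  Submodule.span F
    {x | ∃ l : List ℕ, ((l.countP fun i => decide (i < k)) : ZMod 2) = g ∧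
      x = (l.map (grassGen F)).prod}

/-- The homogeneous elements of degree `1` of `R = UT(1,1;E)`, the `2×2` upper
triangular matrices over the Grassmann algebra `E` with the grading `deg(·)_{k*}`,
graded entrywise: upper triangular matrices all of whose entries are homogeneous of
degree `1` in `E`. -/
def UT2deg1 (F : Type*) [Field F] (k : ℕ) :
    Set (Matrix (Fin 2) (Fin 2) (ExteriorAlgebra F (ℕ →₀ F))) :=
  {M | M 1 0 = 0 ∧ ∀ i j, M i j ∈ grassCompKStar F k 1}

/-!
Call the generators `e_i` with `i < k` small. An odd element for `deg(·)_{k*}` is a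
combination of monomials containing at least one small generator, and the number of small
generators is additive under multiplication. So every entry of a product of `k + 1` odd
matrices is a combination of monomials with at least `k + 1` small generators; such a
monomial repeats a generator and hence vanishes, as the `e_i` square to zero and anticommute.
-/

lemma grassGen_list_prod_eq_zero_of_not_nodup (F : Type*) [Field F] {l : List ℕ}
    (hl : ¬ l.Nodup) : (l.map (grassGen F)).prod = 0 := by
  obtain ⟨i, j, hij, hl_eq⟩ : ∃ i j : Fin l.length, i ≠ j ∧ l.get i = l.get j := by
    simpa [List.nodup_iff_injective_get, Function.Injective, and_comm] using hl
  rw [← List.ofFn_getElem_eq_map]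
  exact (ExteriorAlgebra.ιMulti_apply (R := F) _).symm.trans
    (AlternatingMap.map_eq_zero_of_eq _ _
      (by simpa using congrArg (Finsupp.single · (1 : F)) hl_eq) hij)

theorem List.Nodup.length_le_of_forall_lt {l : List ℕ} {k : ℕ} (hl : l.Nodup)
    (hk : ∀ i ∈ l, i < k) : l.length ≤ k := by
  simpa using (hl.subperm fun i hi => List.mem_range.mpr (hk i hi)).length_le

theorem Matrix.list_prod_apply_mem_pow {R A n : Type*} [CommSemiring R] [Semiring A]
    [Algebra R A] [Fintype n] [DecidableEq n] (S : Submodule R A) (L : List (Matrix n n A))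
    (hL : ∀ M ∈ L, ∀ i j, M i j ∈ S) (i j : n) : L.prod i j ∈ S ^ L.length := by
  induction L generalizing i with
  | nil =>
    rw [List.prod_nil, List.length_nil, pow_zero, Matrix.one_apply]
    split_ifs
    · exact Submodule.one_le.mp le_rfl
    · exact zero_mem _
  | cons M L ih =>
    rw [List.prod_cons, List.length_cons, pow_succ', Matrix.mul_apply]
    exact Submodule.sum_mem _ fun c _ => Submodule.mul_mem_mul (hL M (by simp) i c)
      (ih (fun N hN => hL N (List.mem_cons_of_mem M hN)) c)

noncomputable def grassFiltKStar (F : Type*) [Field F] (k c : ℕ) :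
    Submodule F (ExteriorAlgebra F (ℕ →₀ F)) :=
  Submodule.span F
    {x | ∃ l : List ℕ, c ≤ l.countP (fun i => decide (i < k)) ∧
      x = (l.map (grassGen F)).prod}

section

variable (F : Type*) [Field F] (k : ℕ)

lemma grassCompKStar_one_le_grassFiltKStar_one :
    grassCompKStar F k 1 ≤ grassFiltKStar F k 1 := by
  refine Submodule.span_mono ?_
  rintro x ⟨l, hl, rfl⟩
  refine ⟨l, Nat.one_le_iff_ne_zero.mpr fun h0 => ?_, rfl⟩
  simp [h0] at hl

lemma grassFiltKStar_mul_le (a b : ℕ) :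
    grassFiltKStar F k a * grassFiltKStar F k b ≤ grassFiltKStar F k (a + b) := by
  rw [grassFiltKStar, grassFiltKStar, Submodule.span_mul_span]
  refine Submodule.span_mono ?_
  rintro _ ⟨_, ⟨l₁, hl₁, rfl⟩, _, ⟨l₂, hl₂, rfl⟩, rfl⟩
  refine ⟨l₁ ++ l₂, ?_, by rw [List.map_append, List.prod_append]⟩
  rw [List.countP_append]
  omega

lemma grassCompKStar_one_pow_le (n : ℕ) :
    grassCompKStar F k 1 ^ n ≤ grassFiltKStar F k n := by
  induction n with
  | zero => exact Submodule.one_le.mpr (Submodule.subset_span ⟨[], le_rfl, rfl⟩)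
  | succ n ih =>
    rw [pow_succ', add_comm]
    exact (mul_le_mul' (grassCompKStar_one_le_grassFiltKStar_one F k) ih).trans
      (grassFiltKStar_mul_le F k 1 n)

lemma grassFiltKStar_succ_eq_bot : grassFiltKStar F k (k + 1) = ⊥ := by
  refine Submodule.span_eq_bot.mpr ?_
  rintro _ ⟨l, hl, rfl⟩
  refine grassGen_list_prod_eq_zero_of_not_nodup F fun hnd => ?_
  have := (hnd.filter fun i => decide (i < k))
    |>.length_le_of_forall_lt fun i hi => by simpa using (List.mem_filter.mp hi).2
  rw [List.countP_eq_length_filter] at hl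
  omega

end

theorem UT2_kstar_monomial_identity_general (F : Type*) [Field F] (k : ℕ)
    (z : Fin (k + 1) → Matrix (Fin 2) (Fin 2) (ExteriorAlgebra F (ℕ →₀ F)))
    (hz : ∀ t, z t ∈ UT2deg1 F k) :
    (List.ofFn z).prod = 0 := by
  have hentries : ∀ M ∈ List.ofFn z, ∀ i j, M i j ∈ grassCompKStar F k 1 := by
    rw [List.forall_mem_ofFn_iff]
    exact fun t => (hz t).2
  ext i j
  have h := grassCompKStar_one_pow_le F k (k + 1)
    (List.length_ofFn (f := z) ▸ Matrix.list_prod_apply_mem_pow _ _ hentries i j)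
  rwa [grassFiltKStar_succ_eq_bot, Submodule.mem_bot] at h

/-- With the grading `deg(·)_{k*}` on `E`, the graded monomial `z₁ z₂ ⋯ z_{k+1}` in
degree-`1` variables is a graded identity of `R = UT(1,1;E)`: any product of `k+1`
homogeneous degree-`1` elements of `R` is zero. -/
theorem UT2_kstar_monomial_identity (F : Type*) [Field F] [CharZero F] (k : ℕ)
    (z : Fin (k + 1) → Matrix (Fin 2) (Fin 2) (ExteriorAlgebra F (ℕ →₀ F)))
    (hz : ∀ t, z t ∈ UT2deg1 F k) :
    (List.ofFn z).prod = 0 :=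
  UT2_kstar_monomial_identity_general F k z hz
end
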